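/- arXiv:1303.0238 — 2 statements merged into one kernel-verified Lean document; each statement's English description precedes it below -/
import Mathlib

section
/- Let $(V(n))_{n \geq 1}$ be positive real random variables with $n^{1/2} V(n) \to c > 0$ almost surely, and let $(\hat\lambda_n)_{n \geq 1}$ be random variables with $\hat\lambda_n \to \lambda > 0$ almost surely. Define $T(\epsilon) = \inf\{n \geq 1 : V(n) \leq \epsilon \hat\lambda_n\}$. Then almost surely $\epsilon\, T(\epsilon)^{1/2} \to c/\lambda$ as $\epsilon \to 0$. -/
open Filter MeasureTheory Set

open Topology

/-! Pathwise, `T(ε)` is the first crossing time `t` of `v n = V(n)` below `ε l n`, `l n = λ̂_n`.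
Since `v > 0`, only small `ε` allow late crossings, so `T(ε) → ∞` as `ε → 0⁺`. Minimality of `t`
gives `v t ≤ ε l t` and `ε l (t - 1) < v (t - 1)`, that is
`√t v t / l t ≤ ε √t < √t v (t - 1) / l (t - 1)`.
Both bounds are sequences in `t` converging to `c / λ` (using `√(n + 1) / √n → 1`), evaluated
along `t = T(ε) → ∞`. -/

section SqrtScaling

variable {v : ℕ → ℝ} {c : ℝ}

theorem tendsto_zero_of_tendsto_sqrt_mul
    (hv : Tendsto (fun n : ℕ => √n * v n) atTop (𝓝 c)) : Tendsto v atTop (𝓝 0) := by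
  have hsqrt : Tendsto (fun n : ℕ => √(n : ℝ)) atTop atTop :=
    Real.tendsto_sqrt_atTop.comp tendsto_natCast_atTop_atTop
  refine (hv.div_atTop hsqrt).congr' ?_
  filter_upwards [eventually_ge_atTop 1] with n hn
  have : (0 : ℝ) < √n := Real.sqrt_pos.2 (by exact_mod_cast hn)
  field_simp

theorem tendsto_sqrt_succ_mul_of_tendsto_sqrt_mul
    (hv : Tendsto (fun n : ℕ => √n * v n) atTop (𝓝 c)) :
    Tendsto (fun n : ℕ => √(n + 1) * v n) atTop (𝓝 c) := by
  have hratio : Tendsto (fun n : ℕ => √((n : ℝ) / (n + 1))) atTop (𝓝 1) := by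
    simpa using (tendsto_natCast_div_add_atTop (1 : ℝ)).sqrt
  refine (div_one c ▸ hv.div hratio one_ne_zero).congr' ?_
  filter_upwards [eventually_ge_atTop 1] with n hn
  have : (0 : ℝ) < n := by exact_mod_cast hn
  rw [Pi.div_apply, Real.sqrt_div this.le]
  field_simp

theorem tendsto_sqrt_mul_pred_of_tendsto_sqrt_mul
    (hv : Tendsto (fun n : ℕ => √n * v n) atTop (𝓝 c)) :
    Tendsto (fun n : ℕ => √n * v (n - 1)) atTop (𝓝 c) := by
  refine ((tendsto_sqrt_succ_mul_of_tendsto_sqrt_mul hv).comp (tendsto_sub_atTop_nat 1)).congr' ?_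
  filter_upwards [eventually_ge_atTop 1] with n hn
  simp [Nat.cast_sub hn]

end SqrtScaling

/-- The stopping time `T(ε)`; it is the junk value `0` when `v n ≤ ε * l n` for no `n ≥ 1`. -/
noncomputable def firstCrossing (v l : ℕ → ℝ) (ε : ℝ) : ℕ :=
  sInf {n : ℕ | 1 ≤ n ∧ v n ≤ ε * l n}

namespace firstCrossing

variable {v l : ℕ → ℝ} {ε lam : ℝ}

theorem spec (h : ∃ n, 1 ≤ n ∧ v n ≤ ε * l n) :
    1 ≤ firstCrossing v l ε ∧ v (firstCrossing v l ε) ≤ ε * l (firstCrossing v l ε) :=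
  Nat.sInf_mem h

theorem mul_lt_of_lt {n : ℕ} (hn : 1 ≤ n) (hlt : n < firstCrossing v l ε) : ε * l n < v n :=
  not_le.1 fun hle => Nat.notMem_of_lt_sInf hlt ⟨hn, hle⟩

theorem exists_of_tendsto (hv : Tendsto v atTop (𝓝 0)) (hl : Tendsto l atTop (𝓝 lam))
    (hlam : 0 < lam) (hε : 0 < ε) : ∃ n, 1 ≤ n ∧ v n ≤ ε * l n := by
  have hgap : Tendsto (fun n => ε * l n - v n) atTop (𝓝 (ε * lam - 0)) :=
    (hl.const_mul ε).sub hv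
  obtain ⟨n, hn, hpos⟩ := ((eventually_ge_atTop 1).and
    (hgap.eventually_const_lt (by rw [sub_zero]; positivity))).exists
  exact ⟨n, hn, by linarith⟩

theorem tendsto_nhdsGT_atTop (hv_pos : ∀ n, 0 < v n)
    (hexists : ∀ ε > 0, ∃ n, 1 ≤ n ∧ v n ≤ ε * l n) :
    Tendsto (firstCrossing v l) (𝓝[>] 0) atTop := by
  refine Filter.tendsto_atTop.2 fun N => ?_
  have hsmall : ∀ᶠ ε in 𝓝 (0 : ℝ), ∀ n ∈ Iio N, ε * l n < v n :=
    (eventually_all_finite (finite_Iio N)).2 fun n _ =>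
      ((continuous_mul_const (l n)).tendsto' 0 0 (zero_mul _)).eventually_lt_const (hv_pos n)
  filter_upwards [nhdsWithin_le_nhds hsmall, self_mem_nhdsWithin] with ε hsmall (hε : 0 < ε)
  by_contra! hlt
  have hcross := (spec (hexists ε hε)).2
  linarith [hsmall _ hlt]

theorem tendsto_mul_sqrt (hv_pos : ∀ n, 0 < v n) {c : ℝ}
    (hv : Tendsto (fun n : ℕ => √n * v n) atTop (𝓝 c)) (hl : Tendsto l atTop (𝓝 lam))
    (hlam : 0 < lam) :
    Tendsto (fun ε => ε * √(firstCrossing v l ε)) (𝓝[>] 0) (𝓝 (c / lam)) := by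
  have hexists : ∀ ε > 0, ∃ n, 1 ≤ n ∧ v n ≤ ε * l n := fun _ hε =>
    exists_of_tendsto (tendsto_zero_of_tendsto_sqrt_mul hv) hl hlam hε
  have hT := tendsto_nhdsGT_atTop hv_pos hexists
  have hl_pred : Tendsto (fun n => l (n - 1)) atTop (𝓝 lam) := hl.comp (tendsto_sub_atTop_nat 1)
  have hlower := (hv.div hl hlam.ne').comp hT
  have hupper := ((tendsto_sqrt_mul_pred_of_tendsto_sqrt_mul hv).div hl_pred hlam.ne').comp hT
  refine tendsto_of_tendsto_of_tendsto_of_le_of_le' hlower hupper ?_ ?_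
  · filter_upwards [self_mem_nhdsWithin, hT.eventually (hl.eventually_const_lt hlam)]
      with ε (hε : 0 < ε) hl_pos
    set t := firstCrossing v l ε
    rw [Function.comp_apply, Pi.div_apply, div_le_iff₀ hl_pos]
    have := mul_le_mul_of_nonneg_left (spec (hexists ε hε)).2 (Real.sqrt_nonneg t)
    linarith
  · filter_upwards [hT.eventually (eventually_ge_atTop 2),
      hT.eventually (hl_pred.eventually_const_lt hlam)] with ε h2 hl_pos
    set t := firstCrossing v l ε
    rw [Function.comp_apply, Pi.div_apply, le_div_iff₀ hl_pos]
    have hbefore : ε * l (t - 1) < v (t - 1) := mul_lt_of_lt (by omega) (by omega)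
    have := mul_le_mul_of_nonneg_left hbefore.le (Real.sqrt_nonneg t)
    linarith

end firstCrossing

theorem relative_sd_stopping_time_growth_general
    (Ω : Type*) [MeasurableSpace Ω] (μ : Measure Ω)
    (V : ℕ → Ω → ℝ) (c : ℝ) (hVpos : ∀ n ω, 0 < V n ω)
    (hconv : ∀ᵐ ω ∂μ, Tendsto (fun n : ℕ => Real.sqrt n * V n ω) atTop (nhds c))
    (lam : ℝ) (hlam : 0 < lam) (lamHat : ℕ → Ω → ℝ)
    (hlamHat : ∀ᵐ ω ∂μ, Tendsto (fun n => lamHat n ω) atTop (nhds lam))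
    (T : ℝ → Ω → ℕ) (hT : ∀ ε ω, T ε ω = sInf {n : ℕ | 1 ≤ n ∧ V n ω ≤ ε * lamHat n ω}) :
    ∀ᵐ ω ∂μ,
      Tendsto (fun ε => ε * Real.sqrt (T ε ω)) (nhdsWithin 0 (Set.Ioi 0))
        (nhds (c / lam)) := by
  filter_upwards [hconv, hlamHat] with ω hV hl
  simp only [hT]
  exact firstCrossing.tendsto_mul_sqrt (hVpos · ω) hV hl hlam

theorem relative_sd_stopping_time_growth
    (Ω : Type*) [MeasurableSpace Ω] (μ : Measure Ω) [IsProbabilityMeasure μ]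
    (V : ℕ → Ω → ℝ) (c : ℝ) (hc : 0 < c) (hVpos : ∀ n ω, 0 < V n ω)
    (hconv : ∀ᵐ ω ∂μ, Tendsto (fun n : ℕ => Real.sqrt n * V n ω) atTop (nhds c))
    (lam : ℝ) (hlam : 0 < lam) (lamHat : ℕ → Ω → ℝ)
    (hlamHat : ∀ᵐ ω ∂μ, Tendsto (fun n => lamHat n ω) atTop (nhds lam))
    (T : ℝ → Ω → ℕ) (hT : ∀ ε ω, T ε ω = sInf {n : ℕ | 1 ≤ n ∧ V n ω ≤ ε * lamHat n ω}) :
    ∀ᵐ ω ∂μ,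
      Tendsto (fun ε => ε * Real.sqrt (T ε ω)) (nhdsWithin 0 (Set.Ioi 0))
        (nhds (c / lam)) :=
  relative_sd_stopping_time_growth_general Ω μ V c hVpos hconv lam hlam lamHat hlamHat T hT
end

section
/- Let $(a_n)$ be a sequence of positive reals with $\sqrt{n}\, a_n \to c$ for some $c > 0$, let $(b_n)$ be positive reals with $b_n \to \lambda > 0$, and for $\epsilon > 0$ define $T(\epsilon) = \inf\{n \geq 1 : a_n \leq \epsilon b_n\}$. Then $T(\epsilon) < \infty$ for every $\epsilon > 0$, $T(\epsilon) \to \infty$ as $\epsilon \to 0$, and $\epsilon \sqrt{T(\epsilon)} \to c/\lambda$ as $\epsilon \to 0$. -/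
/-!
Write `r n = a n / b n`, so that `T ε` is the first time `n ≥ 1` with `r n ≤ ε`, and
`√n * r n → c / λ`; in particular `r → 0`, which makes `T ε` finite. Since `r` is positive, each
of the finitely many times below a given `N` is skipped once `ε` is small, so `T ε → ∞`.
Finally `r (T ε) ≤ ε < r (T ε - 1)` sandwiches `ε √(T ε)` between `√(T ε) r (T ε)` and
`√(T ε - 1) r (T ε - 1) + ε`, because `√n ≤ √(n - 1) + 1`; both bounds tend to `c / λ`.
-/

open Filter Set Topology

namespace Real

lemma sqrt_natCast_le_sqrt_pred_add_one (n : ℕ) : √(n : ℝ) ≤ √((n - 1 : ℕ) : ℝ) + 1 := by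
  rcases Nat.eq_zero_or_pos n with rfl | hn
  · simp
  rw [sqrt_le_iff]
  refine ⟨by positivity, ?_⟩
  have hpred : ((n - 1 : ℕ) : ℝ) = n - 1 := by rw [Nat.cast_sub hn, Nat.cast_one]
  nlinarith [sq_sqrt (Nat.cast_nonneg (n - 1)), sqrt_nonneg ((n - 1 : ℕ) : ℝ)]

end Real

lemma tendsto_zero_of_tendsto_sqrt_mul_s3 {r : ℕ → ℝ} {L : ℝ}
    (hr : Tendsto (fun n : ℕ => √(n : ℝ) * r n) atTop (𝓝 L)) : Tendsto r atTop (𝓝 0) := by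
  refine (hr.div_atTop (Real.tendsto_sqrt_atTop.comp tendsto_natCast_atTop_atTop)).congr' ?_
  filter_upwards [eventually_ge_atTop 1] with n hn
  have : 0 < √(n : ℝ) := Real.sqrt_pos.mpr (by exact_mod_cast hn)
  exact mul_div_cancel_left₀ _ this.ne'

/-- `sInf ∅ = 0`: this is `0` when `r n > ε` for all `n ≥ 1`. -/
noncomputable def firstPassage (r : ℕ → ℝ) (ε : ℝ) : ℕ := sInf {n : ℕ | 1 ≤ n ∧ r n ≤ ε}

section firstPassage

variable {r : ℕ → ℝ} {ε : ℝ}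

lemma nonempty_setOf_le_of_tendsto_zero (hr : Tendsto r atTop (𝓝 0)) (hε : 0 < ε) :
    {n : ℕ | 1 ≤ n ∧ r n ≤ ε}.Nonempty :=
  ((eventually_ge_atTop 1).and (hr.eventually (eventually_le_nhds hε))).exists

lemma firstPassage_mem (hr : Tendsto r atTop (𝓝 0)) (hε : 0 < ε) :
    firstPassage r ε ∈ {n : ℕ | 1 ≤ n ∧ r n ≤ ε} :=
  Nat.sInf_mem (nonempty_setOf_le_of_tendsto_zero hr hε)

lemma lt_of_lt_firstPassage {n : ℕ} (hn : 1 ≤ n) (hlt : n < firstPassage r ε) : ε < r n :=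
  not_le.mp fun hle => Nat.notMem_of_lt_sInf hlt ⟨hn, hle⟩

lemma tendsto_firstPassage_atTop (hpos : ∀ n, 0 < r n) (hr : Tendsto r atTop (𝓝 0)) :
    Tendsto (firstPassage r) (𝓝[>] 0) atTop := by
  refine tendsto_atTop.mpr fun N => ?_
  have hskip : ∀ᶠ ε in 𝓝[>] (0 : ℝ), ∀ n ∈ Finset.Ico 1 N, ε < r n :=
    (eventually_all_finset _).mpr fun n _ =>
      nhdsWithin_le_nhds (eventually_lt_nhds (hpos n))
  filter_upwards [self_mem_nhdsWithin, hskip] with ε hε hskip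
  obtain ⟨hone, hle⟩ := firstPassage_mem hr hε
  by_contra! hlt
  exact (hskip _ (Finset.mem_Ico.mpr ⟨hone, hlt⟩)).not_ge hle

theorem tendsto_mul_sqrt_firstPassage {L : ℝ} (hpos : ∀ n, 0 < r n)
    (hr : Tendsto (fun n : ℕ => √(n : ℝ) * r n) atTop (𝓝 L)) :
    Tendsto (fun ε => ε * √(firstPassage r ε : ℝ)) (𝓝[>] 0) (𝓝 L) := by
  have hr0 := tendsto_zero_of_tendsto_sqrt_mul_s3 hr
  have hT := tendsto_firstPassage_atTop hpos hr0
  have hlower : Tendsto (fun ε => √(firstPassage r ε : ℝ) * r (firstPassage r ε)) (𝓝[>] 0)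
      (𝓝 L) := hr.comp hT
  have hupper : Tendsto (fun ε => √((firstPassage r ε - 1 : ℕ) : ℝ) *
      r (firstPassage r ε - 1) + ε) (𝓝[>] 0) (𝓝 L) := by
    simpa using (hr.comp ((tendsto_sub_atTop_nat 1).comp hT)).add
      (tendsto_id.mono_left (nhdsWithin_le_nhds (a := (0 : ℝ))))
  refine tendsto_of_tendsto_of_tendsto_of_le_of_le' hlower hupper ?_ ?_
  · filter_upwards [self_mem_nhdsWithin] with ε hε
    rw [mul_comm ε]
    exact mul_le_mul_of_nonneg_left (firstPassage_mem hr0 hε).2 (Real.sqrt_nonneg _)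
  · filter_upwards [self_mem_nhdsWithin, hT.eventually (eventually_ge_atTop 2)] with ε hε hT2
    have hskip : ε < r (firstPassage r ε - 1) := lt_of_lt_firstPassage (by omega) (by omega)
    calc ε * √(firstPassage r ε : ℝ)
        ≤ ε * (√((firstPassage r ε - 1 : ℕ) : ℝ) + 1) :=
          mul_le_mul_of_nonneg_left (Real.sqrt_natCast_le_sqrt_pred_add_one _) hε.out.le
      _ ≤ √((firstPassage r ε - 1 : ℕ) : ℝ) * r (firstPassage r ε - 1) + ε := by
          nlinarith [Real.sqrt_nonneg ((firstPassage r ε - 1 : ℕ) : ℝ)]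

end firstPassage

lemma setOf_le_mul_eq_setOf_div_le {a b : ℕ → ℝ} (hb : ∀ n, 0 < b n) (ε : ℝ) :
    {n : ℕ | 1 ≤ n ∧ a n ≤ ε * b n} = {n : ℕ | 1 ≤ n ∧ a n / b n ≤ ε} :=
  Set.ext fun n => and_congr_right fun _ => (div_le_iff₀ (hb n)).symm

theorem deterministic_relative_stopping_rule_general
    (a b : ℕ → ℝ) (c lam : ℝ) (hlam : 0 < lam)
    (ha : ∀ n, 0 < a n) (hb : ∀ n, 0 < b n)
    (hconva : Tendsto (fun n : ℕ => Real.sqrt n * a n) atTop (nhds c))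
    (hconvb : Tendsto b atTop (nhds lam))
    (T : ℝ → ℕ) (hT : ∀ ε, T ε = sInf {n : ℕ | 1 ≤ n ∧ a n ≤ ε * b n}) :
    (∀ ε > (0:ℝ), {n : ℕ | 1 ≤ n ∧ a n ≤ ε * b n}.Nonempty) ∧
    Tendsto T (nhdsWithin 0 (Set.Ioi 0)) atTop ∧
    Tendsto (fun ε => ε * Real.sqrt (T ε)) (nhdsWithin 0 (Set.Ioi 0)) (nhds (c / lam)) := by
  have hT_eq : T = firstPassage (fun n => a n / b n) := by
    funext ε
    rw [hT, setOf_le_mul_eq_setOf_div_le hb]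
    rfl
  have hpos : ∀ n, 0 < a n / b n := fun n => div_pos (ha n) (hb n)
  have hrate : Tendsto (fun n : ℕ => √(n : ℝ) * (a n / b n)) atTop (𝓝 (c / lam)) :=
    (hconva.div hconvb hlam.ne').congr fun n => mul_div_assoc _ _ _
  have hratio := tendsto_zero_of_tendsto_sqrt_mul_s3 hrate
  subst hT_eq
  refine ⟨fun ε hε => ?_, tendsto_firstPassage_atTop hpos hratio,
    tendsto_mul_sqrt_firstPassage hpos hrate⟩
  rw [setOf_le_mul_eq_setOf_div_le hb]
  exact nonempty_setOf_le_of_tendsto_zero hratio hε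

theorem deterministic_relative_stopping_rule
    (a b : ℕ → ℝ) (c lam : ℝ) (hc : 0 < c) (hlam : 0 < lam)
    (ha : ∀ n, 0 < a n) (hb : ∀ n, 0 < b n)
    (hconva : Tendsto (fun n : ℕ => Real.sqrt n * a n) atTop (nhds c))
    (hconvb : Tendsto b atTop (nhds lam))
    (T : ℝ → ℕ) (hT : ∀ ε, T ε = sInf {n : ℕ | 1 ≤ n ∧ a n ≤ ε * b n}) :
    (∀ ε > (0:ℝ), {n : ℕ | 1 ≤ n ∧ a n ≤ ε * b n}.Nonempty) ∧
    Tendsto T (nhdsWithin 0 (Set.Ioi 0)) atTop ∧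
    Tendsto (fun ε => ε * Real.sqrt (T ε)) (nhdsWithin 0 (Set.Ioi 0)) (nhds (c / lam)) :=
  deterministic_relative_stopping_rule_general a b c lam hlam ha hb hconva hconvb T hT
end
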